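/- arXiv:math/9712215 — 9 statements merged into one kernel-verified Lean document; each statement's English description precedes it below -/
import Mathlib

section
/- For k < n/2, there is an injection from the set of north-east lattice paths from (0,0) to (k, n-k) into the set of north-east lattice paths from (0,0) to (k+1, n-k-1). -/
/-- A north-east lattice path, recorded by its list of steps. -/
def IsNEPath (p : List (ℤ × ℤ)) : Prop :=
  ∀ s ∈ p, s = (1, 0) ∨ s = (0, 1)

/-! A path to `(a, n - a)` has `n` steps and is determined by which `a` of them go east, so such
paths are equinumerous with the `a`-subsets of `Fin n`. The injection then exists because
`C(n, k) ≤ C(n, k + 1)` when `2k < n`, by `(k + 1) C(n, k + 1) = (n - k) C(n, k)`. -/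

open Finset

theorem Nat.choose_le_choose_succ_of_two_mul_lt {n k : ℕ} (h : 2 * k < n) :
    n.choose k ≤ n.choose (k + 1) := by
  refine Nat.le_of_mul_le_mul_right ?_ k.succ_pos
  rw [Nat.choose_succ_right_eq]
  exact Nat.mul_le_mul_left _ (by omega)

theorem IsNEPath.length_eq {p : List (ℤ × ℤ)} (hp : IsNEPath p) :
    (p.length : ℤ) = p.sum.1 + p.sum.2 := by
  induction p with
  | nil => simp
  | cons s p ih =>
    rcases hp s List.mem_cons_self with rfl | rfl <;>
    · simp only [List.length_cons, List.sum_cons, Prod.fst_add, Prod.snd_add]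
      push_cast
      linarith [ih fun t ht => hp t (List.mem_cons_of_mem _ ht)]

def pathOfFinset (n : ℕ) (s : Finset (Fin n)) : List (ℤ × ℤ) :=
  List.ofFn fun i => if i ∈ s then (1, 0) else (0, 1)

theorem isNEPath_pathOfFinset (n : ℕ) (s : Finset (Fin n)) : IsNEPath (pathOfFinset n s) := by
  intro x hx
  obtain ⟨i, rfl⟩ := List.mem_ofFn.mp hx
  split_ifs <;> simp

theorem sum_pathOfFinset (n : ℕ) (s : Finset (Fin n)) :
    (pathOfFinset n s).sum = ((#s : ℤ), (n : ℤ) - #s) := by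
  have hlen := (isNEPath_pathOfFinset n s).length_eq
  have hfst : (pathOfFinset n s).sum.1 = #s := by
    simp [pathOfFinset, List.sum_ofFn, Prod.fst_sum, apply_ite]
  rw [pathOfFinset, List.length_ofFn, ← pathOfFinset] at hlen
  ext
  · exact hfst
  · linarith

theorem pathOfFinset_injective (n : ℕ) : Function.Injective (pathOfFinset n) := by
  intro s t hst
  ext i
  have hi := congrFun (List.ofFn_inj.mp hst) i
  by_cases hs : i ∈ s <;> by_cases ht : i ∈ t <;> simp_all

theorem IsNEPath.exists_pathOfFinset {p : List (ℤ × ℤ)} {n : ℕ} (hp : IsNEPath p)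
    (hn : p.length = n) : ∃ s : Finset (Fin n), pathOfFinset n s = p := by
  classical
  subst hn
  refine ⟨({i | p.get i = (1, 0)} : Finset _),
    List.ext_get (by simp [pathOfFinset]) fun j hj _ => ?_⟩
  rcases hp _ (p.get_mem ⟨j, by simpa [pathOfFinset] using hj⟩) with h | h <;>
    simp_all [pathOfFinset]

noncomputable def finsetEquivNEPaths (n a : ℕ) (b : ℤ) (hab : a + b = n) :
    {s : Finset (Fin n) // #s = a} ≃ {p : List (ℤ × ℤ) // IsNEPath p ∧ p.sum = ((a : ℤ), b)} :=
  Equiv.ofBijective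
    (fun s => ⟨pathOfFinset n s, isNEPath_pathOfFinset n s, by
      rw [sum_pathOfFinset, s.2, ← hab, add_sub_cancel_left]⟩)
    ⟨fun s t hst => Subtype.ext (pathOfFinset_injective n (congrArg Subtype.val hst)), by
      rintro ⟨p, hp, hsum⟩
      have hlen : p.length = n := by have := hp.length_eq; rw [hsum] at this; omega
      obtain ⟨s, rfl⟩ := hp.exists_pathOfFinset hlen
      refine ⟨⟨s, ?_⟩, rfl⟩
      rw [sum_pathOfFinset, Prod.mk.injEq] at hsum
      exact_mod_cast hsum.1⟩

/-- For `k < n/2` there is an injection from north-east paths from the origin to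
`(k, n-k)` into the north-east paths from the origin to `(k+1, n-k-1)`. -/
theorem ne_path_injection (n k : ℕ) (h : 2 * k < n) :
    ∃ f : {p : List (ℤ × ℤ) // IsNEPath p ∧ p.sum = ((k : ℤ), (n : ℤ) - k)} →
        {p : List (ℤ × ℤ) // IsNEPath p ∧ p.sum = ((k : ℤ) + 1, (n : ℤ) - k - 1)},
      Function.Injective f := by
  have hcard : Fintype.card {s : Finset (Fin n) // #s = k}
      ≤ Fintype.card {s : Finset (Fin n) // #s = k + 1} := by
    simpa only [Fintype.card_finset_len, Fintype.card_fin]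
      using Nat.choose_le_choose_succ_of_two_mul_lt h
  obtain ⟨e⟩ := Function.Embedding.nonempty_of_card_le hcard
  let source := finsetEquivNEPaths n k (n - k) (by ring)
  -- its codomain matches because `((k + 1 : ℕ) : ℤ)` is definitionally `(k : ℤ) + 1`
  let target := finsetEquivNEPaths n (k + 1) (n - k - 1) (by push_cast; ring)
  exact ⟨target ∘ e ∘ source.symm, target.injective.comp (e.injective.comp source.symm.injective)⟩
end

section
/- The number of lattice paths of length n from (0,0) to (i,j) using unit steps north, east, south, west equals C(n, r) * C(n, s), where r = (n - i - j)/2 and s = (n + i - j)/2, provided n ≡ i + j (mod 2). -/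
/-- Binomial coefficient with an integer lower index, interpreted as `0` when the
lower index is negative. -/
def zchoose (n : ℕ) (m : ℤ) : ℕ :=
  if 0 ≤ m then Nat.choose n m.toNat else 0

/-- A four-step lattice path, recorded by its list of steps, each one of
`N = (0,1)`, `E = (1,0)`, `S = (0,-1)`, `W = (-1,0)`. -/
def IsFourStepPath (p : List (ℤ × ℤ)) : Prop :=
  ∀ s ∈ p, s = (0, 1) ∨ s = (1, 0) ∨ s = (0, -1) ∨ s = (-1, 0)

/-!
Rotating the plane by `-45°` and scaling by `√2`, i.e. `(x, y) ↦ (x + y, y - x)`, maps the four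
steps `N, E, S, W` bijectively onto `{±1} × {±1}`. A four-step path of length `n` thus becomes a
pair of independent `±1` sequences of length `n`, and the path ends at `(i, j)` exactly when the
sequences sum to `i + j` and `j - i`. A `±1` sequence of length `n` with `r` entries `-1` sums to
`n - 2r`, so there are `C(n, (n - m) / 2)` of them with sum `m`.
-/

open Finset
open Fintype (piFinset mem_piFinset)

lemma zchoose_card_eq_card_filter {ι : Type*} [Fintype ι] (q : ℤ) :
    zchoose (Fintype.card ι) q = #{A : Finset ι | (#A : ℤ) = q} := by
  unfold zchoose
  split_ifs with hq
  · have hcard : ({A | (#A : ℤ) = q} : Finset (Finset ι)) = ({A | #A = q.toNat} : Finset _) :=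
      filter_congr fun A _ => by omega
    rw [hcard, univ_filter_card_eq, card_powersetCard, card_univ]
  · rw [eq_comm, Finset.card_eq_zero, filter_eq_empty_iff]
    intro A _
    omega

lemma card_list_eq_card_piFinset {α : Type*} [DecidableEq α] [AddCommMonoid α]
    (n : ℕ) (s : Finset α) (t : α) :
    Nat.card {p : List α // p.length = n ∧ (∀ x ∈ p, x ∈ s) ∧ p.sum = t} =
      #{f ∈ piFinset fun _ : Fin n => s | ∑ k, f k = t} := by
  rw [← Nat.card_eq_finsetCard]
  refine Nat.card_congr ((Equiv.subtypeEquiv (Equiv.vectorEquivFin α n).symm fun f => ?_).trans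
    (Equiv.subtypeSubtypeEquivSubtypeInter _ _)).symm
  have hf : ((Equiv.vectorEquivFin α n).symm f).1 = List.ofFn f := List.Vector.toList_ofFn f
  simp [hf, List.sum_ofFn]

section Walks

variable {ι : Type*} [Fintype ι] [DecidableEq ι]

lemma card_piFinset_sum_map {M N : Type*} [AddCommMonoid M] [AddCommMonoid N]
    [DecidableEq M] [DecidableEq N] (φ : M →+ N) (hφ : Function.Injective φ)
    (s : Finset M) (t : M) :
    #{f ∈ piFinset fun _ : ι => s | ∑ k, f k = t} =
      #{g ∈ piFinset fun _ : ι => s.image φ | ∑ k, g k = φ t} := by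
  refine card_bij (fun f _ => φ ∘ f) ?_ ?_ ?_
  · intro f hf
    simp only [mem_filter, mem_piFinset] at hf ⊢
    exact ⟨fun k => mem_image_of_mem φ (hf.1 k), by simp [← map_sum, hf.2]⟩
  · intro f _ g _ h
    exact funext fun k => hφ (congrFun h k)
  · intro g hg
    simp only [mem_filter, mem_piFinset, mem_image] at hg
    choose f hfs hf using hg.1
    have hg' : g = φ ∘ f := funext fun k => (hf k).symm
    refine ⟨f, ?_, hg'.symm⟩
    simp only [mem_filter, mem_piFinset]
    refine ⟨hfs, hφ ?_⟩
    rw [map_sum, ← hg.2, hg']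
    rfl

lemma card_piFinset_sum_prod {M N : Type*} [AddCommMonoid M] [AddCommMonoid N]
    [DecidableEq M] [DecidableEq N] (s : Finset M) (t : Finset N) (a : M) (b : N) :
    #{g ∈ piFinset fun _ : ι => s ×ˢ t | ∑ k, g k = (a, b)} =
      #{f ∈ piFinset fun _ : ι => s | ∑ k, f k = a} *
        #{f ∈ piFinset fun _ : ι => t | ∑ k, f k = b} := by
  rw [← card_product]
  refine card_nbij' (fun g => (fun k => (g k).1, fun k => (g k).2)) (fun f k => (f.1 k, f.2 k))
    ?_ ?_ ?_ ?_
  · intro g hg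
    simp only [coe_filter, Set.mem_ofPred_eq, mem_piFinset, mem_product] at hg ⊢
    simp [← Prod.fst_sum, ← Prod.snd_sum, hg.2, fun k => (hg.1 k).1, fun k => (hg.1 k).2]
  · intro f hf
    simp only [coe_filter, coe_product, Set.mem_prod, Set.mem_ofPred_eq, mem_piFinset,
      mem_product] at hf ⊢
    exact ⟨fun k => ⟨hf.1.1 k, hf.2.1 k⟩,
      Prod.ext (by simp [Prod.fst_sum, hf.1.2]) (by simp [Prod.snd_sum, hf.2.2])⟩
  · intro g _; rfl
  · intro f _; rfl

lemma sum_ite_mem_neg_one_one (A : Finset ι) :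
    ∑ k, (if k ∈ A then (-1 : ℤ) else 1) = Fintype.card ι - 2 * #A := by
  simp only [sum_ite, sum_const, filter_mem_eq_inter, univ_inter, filter_notMem_eq_sdiff,
    card_univ_sdiff]
  rw [nsmul_eq_mul, nsmul_eq_mul, Nat.cast_sub (card_le_univ A)]
  ring

lemma card_piFinset_signs_sum (m : ℤ) :
    #{g ∈ piFinset fun _ : ι => ({1, -1} : Finset ℤ) | ∑ k, g k = m} =
      #{A : Finset ι | (Fintype.card ι : ℤ) - 2 * #A = m} := by
  refine card_nbij' (fun g => ({k | g k = -1} : Finset ι)) (fun A k => if k ∈ A then -1 else 1)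
    ?_ ?_ ?_ ?_
  · intro g hg
    simp only [coe_filter, mem_piFinset, Set.mem_ofPred_eq, mem_insert, mem_singleton, mem_univ,
      true_and] at hg ⊢
    rw [← hg.2, ← sum_ite_mem_neg_one_one]
    refine Finset.sum_congr rfl fun k _ => ?_
    rcases hg.1 k with h | h <;> simp [h]
  · intro A hA
    simp only [coe_filter, mem_univ, true_and, Set.mem_ofPred_eq, mem_piFinset] at hA ⊢
    refine ⟨fun k => ?_, by rw [sum_ite_mem_neg_one_one, hA]⟩
    split_ifs <;> simp
  · intro g hg
    simp only [coe_filter, mem_piFinset, Set.mem_ofPred_eq, mem_insert, mem_singleton] at hg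
    ext k
    rcases hg.1 k with h | h <;> simp [h]
  · intro A _
    ext k
    simp

lemma card_piFinset_signs_sum_eq_zchoose (m : ℤ) (hm : (Fintype.card ι : ℤ) % 2 = m % 2) :
    #{g ∈ piFinset fun _ : ι => ({1, -1} : Finset ℤ) | ∑ k, g k = m} =
      zchoose (Fintype.card ι) ((Fintype.card ι - m) / 2) := by
  rw [card_piFinset_signs_sum, zchoose_card_eq_card_filter]
  exact congrArg card (filter_congr fun A _ => by omega)

end Walks

def fourSteps : Finset (ℤ × ℤ) := {(0, 1), (1, 0), (0, -1), (-1, 0)}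

def rotate : ℤ × ℤ →+ ℤ × ℤ :=
  AddMonoidHom.mk' (fun p => (p.1 + p.2, p.2 - p.1)) fun p q => by
    ext <;> simp only [Prod.fst_add, Prod.snd_add] <;> ring

lemma rotate_apply (x y : ℤ) : rotate (x, y) = (x + y, y - x) := rfl

lemma rotate_injective : Function.Injective rotate := by
  intro p q h
  simp only [rotate, AddMonoidHom.mk'_apply, Prod.mk.injEq] at h
  ext <;> omega

lemma fourSteps_image_rotate : fourSteps.image rotate = ({1, -1} : Finset ℤ) ×ˢ {1, -1} := by
  decide

lemma isFourStepPath_iff (p : List (ℤ × ℤ)) : IsFourStepPath p ↔ ∀ s ∈ p, s ∈ fourSteps := by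
  simp [IsFourStepPath, fourSteps]

/-- The number of four-step lattice paths of length `n` from the origin to `(i,j)`
is `C(n,r) * C(n,s)` where `r = (n-i-j)/2` and `s = (n+i-j)/2`, provided
`n ≡ i + j (mod 2)`. -/
theorem four_step_count (n : ℕ) (i j : ℤ) (hpar : ((n : ℤ)) % 2 = (i + j) % 2) :
    Nat.card {p : List (ℤ × ℤ) // p.length = n ∧ IsFourStepPath p ∧ p.sum = (i, j)} =
      zchoose n (((n : ℤ) - i - j) / 2) * zchoose n (((n : ℤ) + i - j) / 2) := by
  simp_rw [isFourStepPath_iff]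
  rw [card_list_eq_card_piFinset, card_piFinset_sum_map rotate rotate_injective,
    fourSteps_image_rotate, rotate_apply, card_piFinset_sum_prod,
    card_piFinset_signs_sum_eq_zchoose _ (by rwa [Fintype.card_fin]),
    card_piFinset_signs_sum_eq_zchoose _ (by rw [Fintype.card_fin]; omega), Fintype.card_fin,
    sub_add_eq_sub_sub, sub_sub_eq_add_sub, add_sub_right_comm]
end

section
/- The number of four-step lattice paths of length n from (0,0) to (i,j) that stay in the closed upper half-plane y >= 0 equals C(n,r)*C(n,s) - C(n,r-1)*C(n,s-1), where r = (n-i-j)/2 and s = (n+i-j)/2, provided n ≡ i+j (mod 2) and j >= 0. -/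
/-- The path stays in the closed upper half-plane: every point it visits
(i.e. every partial sum) has nonnegative second coordinate. -/
def StaysUpper (p : List (ℤ × ℤ)) : Prop :=
  ∀ m : ℕ, 0 ≤ ((p.take m).sum).2

/-! ### Auxiliary lemmas about `zchoose` -/

lemma zchoose_neg {n : ℕ} {m : ℤ} (h : m < 0) : zchoose n m = 0 := by
  simp [zchoose, not_le.2 h]

lemma zchoose_pascal (n : ℕ) (m : ℤ) :
    zchoose (n+1) m = zchoose n m + zchoose n (m-1) := by
  unfold zchoose
  rcases lt_trichotomy m 0 with h | rfl | h
  · rw [if_neg (not_le.2 h), if_neg (not_le.2 h), if_neg (not_le.2 (by omega : m - 1 < 0))]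
  · norm_num
  · rw [if_pos h.le, if_pos h.le, if_pos (by omega : (0:ℤ) ≤ m - 1)]
    have hm : m.toNat = (m-1).toNat + 1 := by omega
    rw [hm, Nat.choose_succ_succ', Nat.add_comm]

lemma zchoose_of_gt {n : ℕ} {m : ℤ} (h : (n:ℤ) < m) : zchoose n m = 0 := by
  unfold zchoose
  rw [if_pos (by omega : (0:ℤ) ≤ m)]
  exact Nat.choose_eq_zero_of_lt (by omega)

lemma zchoose_mul_symm {n : ℕ} {a b : ℤ} (hab : a + b = (n:ℤ) + 1) :
    zchoose n a * zchoose n b = zchoose n (a-1) * zchoose n (b-1) := by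
  rcases le_or_gt a 0 with ha | ha
  · rw [zchoose_neg (by omega : a - 1 < 0)]
    rcases lt_or_eq_of_le ha with ha' | rfl
    · rw [zchoose_neg ha']; simp
    · rw [zchoose_of_gt (by omega : (n:ℤ) < b)]
      simp
  · rcases le_or_gt a ((n:ℤ)+2) with ha2 | ha2
    · rcases eq_or_lt_of_le ha2 with rfl | ha3
      · rw [zchoose_of_gt (by omega : (n:ℤ) < (n:ℤ)+2), zchoose_neg (by omega : b - 1 < 0)]
        simp
      · have h1 : zchoose n b = zchoose n (a-1) := by
          unfold zchoose
          rw [if_pos (by omega : (0:ℤ) ≤ b), if_pos (by omega : (0:ℤ) ≤ a - 1)]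
          have : b.toNat = n - (a-1).toNat := by omega
          rw [this, Nat.choose_symm (by omega)]
        have h2 : zchoose n a = zchoose n (b-1) := by
          rcases eq_or_lt_of_le (by omega : a ≤ (n:ℤ) + 1) with rfl | ha4
          · rw [zchoose_of_gt (by omega : (n:ℤ) < (n:ℤ)+1), zchoose_neg (by omega : b - 1 < 0)]
          · unfold zchoose
            rw [if_pos (by omega : (0:ℤ) ≤ a), if_pos (by omega : (0:ℤ) ≤ b - 1)]
            have : (b-1).toNat = n - a.toNat := by omega
            rw [this, Nat.choose_symm (by omega)]
        rw [h1, h2, Nat.mul_comm]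
    · rw [zchoose_of_gt (by omega : (n:ℤ) < a), zchoose_neg (by omega : b - 1 < 0)]
      simp

lemma zchoose_zero_of_ne {m : ℤ} (h : m ≠ 0) : zchoose 0 m = 0 := by
  unfold zchoose
  split
  · next h0 =>
    have hm : m.toNat ≠ 0 := by omega
    obtain ⟨k, hk⟩ := Nat.exists_eq_succ_of_ne_zero hm
    rw [hk]
    exact Nat.choose_eq_zero_of_lt (by omega)
  · rfl

/-! ### The closed formula and its recurrence -/

def gcount (n : ℕ) (i j : ℤ) : ℤ :=
  (zchoose n (((n : ℤ) - i - j) / 2) : ℤ) * zchoose n (((n : ℤ) + i - j) / 2) -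
  (zchoose n (((n : ℤ) - i - j) / 2 - 1) : ℤ) * zchoose n (((n : ℤ) + i - j) / 2 - 1)

lemma gcount_rec (n : ℕ) (i j : ℤ) :
    gcount (n+1) i j =
      gcount n (i-1) j + gcount n (i+1) j + gcount n i (j-1) + gcount n i (j+1) := by
  unfold gcount
  have h1 : (((n+1:ℕ)):ℤ) = (n:ℤ) + 1 := by push_cast; ring
  rw [h1]
  set R := ((n:ℤ) + 1 - i - j)/2 with hR
  set S := ((n:ℤ) + 1 + i - j)/2 with hS
  have e1 : ((n:ℤ) - (i-1) - j)/2 = R := by rw [hR]; omega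
  have e2 : ((n:ℤ) + (i-1) - j)/2 = S - 1 := by rw [hS]; omega
  have e3 : ((n:ℤ) - (i+1) - j)/2 = R - 1 := by rw [hR]; omega
  have e4 : ((n:ℤ) + (i+1) - j)/2 = S := by rw [hS]; omega
  have e5 : ((n:ℤ) - i - (j-1))/2 = R := by rw [hR]; omega
  have e6 : ((n:ℤ) + i - (j-1))/2 = S := by rw [hS]; omega
  have e7 : ((n:ℤ) - i - (j+1))/2 = R - 1 := by rw [hR]; omega
  have e8 : ((n:ℤ) + i - (j+1))/2 = S - 1 := by rw [hS]; omega
  rw [e1, e2, e3, e4, e5, e6, e7, e8,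
    zchoose_pascal n R, zchoose_pascal n S, zchoose_pascal n (R-1), zchoose_pascal n (S-1)]
  push_cast
  ring

/-! ### The sets of paths and their cardinalities -/

def PathSet (n : ℕ) (x : ℤ × ℤ) : Type :=
  {p : List (ℤ × ℤ) // p.length = n ∧ IsFourStepPath p ∧ StaysUpper p ∧ p.sum = x}

def stepEnc : ℤ × ℤ → Fin 4 := fun s =>
  if s = (0, 1) then 0 else if s = (1, 0) then 1 else if s = (0, -1) then 2 else 3

def stepDec : Fin 4 → ℤ × ℤ := ![(0, 1), (1, 0), (0, -1), (-1, 0)]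

lemma stepDec_enc {s : ℤ × ℤ} (h : s = (0, 1) ∨ s = (1, 0) ∨ s = (0, -1) ∨ s = (-1, 0)) :
    stepDec (stepEnc s) = s := by
  rcases h with rfl | rfl | rfl | rfl <;> simp [stepEnc, stepDec]

instance PathSet.finite (n : ℕ) (x : ℤ × ℤ) : Finite (PathSet n x) := by
  have hfin : Finite (List.Vector (Fin 4) n) := inferInstance
  refine @Finite.of_injective _ _ hfin
    (fun p : PathSet n x => (⟨(p.1).map stepEnc, by simp [p.2.1]⟩ : List.Vector (Fin 4) n)) ?_
  intro p q h
  have h' : (p.1).map stepEnc = (q.1).map stepEnc := congrArg Subtype.val h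
  have key : ∀ l : List (ℤ × ℤ), IsFourStepPath l → (l.map stepEnc).map stepDec = l := by
    intro l hl
    rw [List.map_map]
    conv_rhs => rw [← List.map_id l]
    exact List.map_congr_left (fun s hs => stepDec_enc (hl s hs))
  apply Subtype.ext
  rw [← key p.1 p.2.2.1, ← key q.1 q.2.2.1, h']

lemma card_pset_zero (x : ℤ × ℤ) : Nat.card (PathSet 0 x) = if x = (0, 0) then 1 else 0 := by
  split
  · next hx =>
    subst hx
    have hnil : ∀ p : PathSet 0 (0, 0), p.1 = [] := fun p => List.eq_nil_of_length_eq_zero p.2.1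
    have hne : Nonempty (PathSet 0 (0,0)) := ⟨⟨[], rfl, by intro s hs; simp at hs,
      by intro m; simp [StaysUpper], by simp [Prod.ext_iff]⟩⟩
    have hsub : Subsingleton (PathSet 0 (0,0)) :=
      ⟨fun p q => Subtype.ext (by rw [hnil p, hnil q])⟩
    exact Nat.card_unique
  · next hx =>
    have : IsEmpty (PathSet 0 x) := ⟨fun p => by
      have h1 : p.1 = [] := List.eq_nil_of_length_eq_zero p.2.1
      have h2 := p.2.2.2.2
      rw [h1] at h2
      simp at h2
      exact hx (by rw [← h2]; rfl)⟩
    exact Nat.card_of_isEmpty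

lemma card_pset_neg (n : ℕ) (x : ℤ × ℤ) (h : x.2 < 0) : Nat.card (PathSet n x) = 0 := by
  have : IsEmpty (PathSet n x) := ⟨fun p => by
    have h1 := p.2.2.2.1 n
    have h2 : List.take n p.1 = p.1 := List.take_of_length_le (le_of_eq p.2.1)
    rw [h2, p.2.2.2.2] at h1
    omega⟩
  exact Nat.card_of_isEmpty

lemma concat_mem {n : ℕ} {x y d : ℤ × ℤ}
    (hd : d = (0,1) ∨ d = (1,0) ∨ d = (0,-1) ∨ d = (-1,0))
    (hxy : x + d = y) (hy : 0 ≤ y.2) (q : PathSet n x) :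
    (q.1 ++ [d]).length = n + 1 ∧ IsFourStepPath (q.1 ++ [d]) ∧
      StaysUpper (q.1 ++ [d]) ∧ (q.1 ++ [d]).sum = y := by
  obtain ⟨hlen, hpath, hup, hsum⟩ := q.2
  have hsumy : (q.1 ++ [d]).sum = y := by
    rw [List.sum_append, hsum]; simpa using hxy
  refine ⟨by simp [hlen], ?_, ?_, hsumy⟩
  · intro s hs
    rcases List.mem_append.1 hs with h | h
    · exact hpath s h
    · simp at h; subst h; exact hd
  · intro m
    rcases le_or_gt m n with hm | hm
    · rw [List.take_append_of_le_length (by omega)]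
      exact hup m
    · rw [List.take_of_length_le (by simp [hlen]; omega), hsumy]
      exact hy

lemma of_concat {n : ℕ} {y : ℤ × ℤ} {q : List (ℤ × ℤ)} {d : ℤ × ℤ}
    (h : (q ++ [d]).length = n + 1 ∧ IsFourStepPath (q ++ [d]) ∧
      StaysUpper (q ++ [d]) ∧ (q ++ [d]).sum = y) :
    q.length = n ∧ IsFourStepPath q ∧ StaysUpper q ∧ q.sum = y - d := by
  obtain ⟨hlen, hpath, hup, hsum⟩ := h
  have hlen' : q.length = n := by simpa using hlen
  have hsum' : q.sum = y - d := by
    rw [List.sum_append] at hsum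
    simp at hsum
    exact eq_sub_of_add_eq hsum
  refine ⟨hlen', fun s hs => hpath s (List.mem_append.2 (Or.inl hs)), ?_, hsum'⟩
  intro m
  rcases le_or_gt m q.length with hm | hm
  · have := hup m
    rwa [List.take_append_of_le_length hm] at this
  · rw [List.take_of_length_le hm.le]
    have := hup q.length
    rwa [List.take_append_of_le_length le_rfl, List.take_length] at this

lemma card_pset_succ (n : ℕ) (i j : ℤ) (hj : 0 ≤ j) :
    Nat.card (PathSet (n+1) (i,j)) =
      Nat.card (PathSet n (i-1,j)) + Nat.card (PathSet n (i+1,j)) +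
      Nat.card (PathSet n (i,j-1)) + Nat.card (PathSet n (i,j+1)) := by
  classical
  have hj' : (0:ℤ) ≤ ((i,j) : ℤ × ℤ).2 := hj
  have key : Nat.card ((PathSet n (i-1,j) ⊕ PathSet n (i+1,j)) ⊕
      (PathSet n (i,j-1) ⊕ PathSet n (i,j+1))) = Nat.card (PathSet (n+1) (i,j)) := by
    apply Nat.card_eq_of_bijective (f := fun z => match z with
      | .inl (.inl q) => ⟨q.1 ++ [(1,0)],
          concat_mem (by tauto) (by simp [Prod.ext_iff]) hj' q⟩
      | .inl (.inr q) => ⟨q.1 ++ [(-1,0)],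
          concat_mem (by tauto) (by simp [Prod.ext_iff]) hj' q⟩
      | .inr (.inl q) => ⟨q.1 ++ [(0,1)],
          concat_mem (by tauto) (by simp [Prod.ext_iff]) hj' q⟩
      | .inr (.inr q) => ⟨q.1 ++ [(0,-1)],
          concat_mem (by tauto) (by simp [Prod.ext_iff]) hj' q⟩)
    constructor
    · intro z1 z2 h
      have h' := congrArg Subtype.val h
      rcases z1 with (q1|q1)|(q1|q1) <;> rcases z2 with (q2|q2)|(q2|q2) <;>
        dsimp only at h' <;>
        (obtain ⟨hq, hd⟩ := List.append_inj h' (by rw [q1.2.1, q2.2.1]);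
          first
            | (rw [Subtype.ext hq])
            | (exfalso; simp [Prod.ext_iff] at hd))
    · intro p
      have hne : p.1 ≠ [] := by
        intro h0
        have := p.2.1
        rw [h0] at this
        simp at this
      have hdecomp : p.1.dropLast ++ [p.1.getLast hne] = p.1 :=
        List.dropLast_append_getLast hne
      have hstep := p.2.2.1 _ (List.getLast_mem hne)
      have hprops : (p.1.dropLast ++ [p.1.getLast hne]).length = n + 1 ∧
          IsFourStepPath (p.1.dropLast ++ [p.1.getLast hne]) ∧
          StaysUpper (p.1.dropLast ++ [p.1.getLast hne]) ∧
          (p.1.dropLast ++ [p.1.getLast hne]).sum = (i,j) := by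
        rw [hdecomp]; exact p.2
      rcases hstep with hc | hc | hc | hc
      · refine ⟨.inr (.inl ⟨p.1.dropLast, ?_⟩), ?_⟩
        · have := of_concat hprops
          rw [hc] at this
          simpa [Prod.ext_iff] using this
        · apply Subtype.ext
          show p.1.dropLast ++ [(0,1)] = p.1
          rw [← hc]; exact hdecomp
      · refine ⟨.inl (.inl ⟨p.1.dropLast, ?_⟩), ?_⟩
        · have := of_concat hprops
          rw [hc] at this
          simpa [Prod.ext_iff] using this
        · apply Subtype.ext
          show p.1.dropLast ++ [(1,0)] = p.1
          rw [← hc]; exact hdecomp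
      · refine ⟨.inr (.inr ⟨p.1.dropLast, ?_⟩), ?_⟩
        · have := of_concat hprops
          rw [hc] at this
          simpa [Prod.ext_iff] using this
        · apply Subtype.ext
          show p.1.dropLast ++ [(0,-1)] = p.1
          rw [← hc]; exact hdecomp
      · refine ⟨.inl (.inr ⟨p.1.dropLast, ?_⟩), ?_⟩
        · have := of_concat hprops
          rw [hc] at this
          simpa [Prod.ext_iff] using this
        · apply Subtype.ext
          show p.1.dropLast ++ [(-1,0)] = p.1
          rw [← hc]; exact hdecomp
  rw [← key, Nat.card_sum, Nat.card_sum, Nat.card_sum]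
  ring

/-! ### The main induction -/

lemma main_count (n : ℕ) : ∀ i j : ℤ, (n:ℤ) % 2 = (i + j) % 2 → -1 ≤ j →
    (Nat.card (PathSet n (i, j)) : ℤ) = gcount n i j := by
  induction n with
  | zero =>
    intro i j hpar hj
    rw [card_pset_zero]
    by_cases hx : ((i,j) : ℤ × ℤ) = ((0,0) : ℤ × ℤ)
    · rw [if_pos hx]
      obtain ⟨hi, hjj⟩ : i = 0 ∧ j = 0 := by simpa [Prod.ext_iff] using hx
      subst hi; subst hjj
      norm_num [gcount, zchoose]
    · rw [if_neg hx]
      have hij : i ≠ 0 ∨ j ≠ 0 := by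
        by_contra hcon
        push_neg at hcon
        exact hx (by simp [Prod.ext_iff, hcon.1, hcon.2])
      unfold gcount
      simp only [Nat.cast_zero]
      have h1 : (0 - i - j)/2 ≠ 0 ∨ (0 + i - j)/2 ≠ 0 := by omega
      have h2 : (0 - i - j)/2 - 1 ≠ 0 ∨ (0 + i - j)/2 - 1 ≠ 0 := by omega
      rcases h1 with h | h <;> rcases h2 with h' | h' <;>
        rw [zchoose_zero_of_ne h, zchoose_zero_of_ne h'] <;> push_cast <;> ring
  | succ n ih =>
    intro i j hpar hj
    rcases eq_or_lt_of_le hj with hj1 | hj1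
    · have hj2 : j = -1 := hj1.symm
      subst hj2
      rw [card_pset_neg _ _ (by norm_num : ((i, (-1:ℤ)) : ℤ × ℤ).2 < 0)]
      unfold gcount
      have hab : ((((n+1:ℕ)):ℤ) - i - (-1))/2 + ((((n+1:ℕ)):ℤ) + i - (-1))/2
          = (((n+1:ℕ)):ℤ) + 1 := by
        push_cast
        push_cast at hpar
        omega
      have hsymm := zchoose_mul_symm hab
      rw [Nat.cast_zero, eq_comm, sub_eq_zero]
      exact_mod_cast hsymm
    · have hj0 : 0 ≤ j := by omega
      rw [card_pset_succ n i j hj0]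
      push_cast
      push_cast at hpar
      rw [ih (i-1) j (by omega) (by omega), ih (i+1) j (by omega) (by omega),
          ih i (j-1) (by omega) (by omega), ih i (j+1) (by omega) (by omega)]
      exact (gcount_rec n i j).symm

/-- The number of four-step lattice paths of length `n` from the origin to `(i,j)`
staying in the half-plane `y ≥ 0` is `C(n,r)C(n,s) - C(n,r-1)C(n,s-1)`, where
`r = (n-i-j)/2`, `s = (n+i-j)/2`, provided `n ≡ i + j (mod 2)` and `j ≥ 0`. -/
theorem four_step_upper_count (n : ℕ) (i j : ℤ)
    (hpar : ((n : ℤ)) % 2 = (i + j) % 2) (hj : 0 ≤ j) :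
    (Nat.card {p : List (ℤ × ℤ) //
        p.length = n ∧ IsFourStepPath p ∧ StaysUpper p ∧ p.sum = (i, j)} : ℤ) =
      (zchoose n (((n : ℤ) - i - j) / 2) : ℤ) * zchoose n (((n : ℤ) + i - j) / 2) -
      (zchoose n (((n : ℤ) - i - j) / 2 - 1) : ℤ) * zchoose n (((n : ℤ) + i - j) / 2 - 1) := by
  have h := main_count n i j hpar (by omega)
  unfold gcount at h
  exact h
end

section
/- For fixed nonnegative integers n and l with l <= n, the sequence a_k = C(n, l-k) * C(n, k), for k = 0, 1, ..., l, is unimodal. -/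
lemma pbu_step (n l k : ℕ) (hl : l ≤ n) (h : 2 * k + 1 ≤ l) :
    Nat.choose n (l - k) * Nat.choose n k ≤
      Nat.choose n (l - (k + 1)) * Nat.choose n (k + 1) := by
  set a := l - k with ha
  have hka : k + 1 ≤ a := by omega
  have han : a ≤ n := by omega
  have hsub : l - (k + 1) = a - 1 := by omega
  rw [hsub]
  have h1 : Nat.choose n (k + 1) * (k + 1) = Nat.choose n k * (n - k) :=
    Nat.choose_succ_right_eq n k
  have h2 : Nat.choose n a * a = Nat.choose n (a - 1) * (n - (a - 1)) := by
    have : a = (a - 1) + 1 := by omega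
    rw [this, Nat.choose_succ_right_eq]
    simp
  have hpos : 0 < a * (k + 1) := Nat.mul_pos (by omega) k.succ_pos
  apply Nat.le_of_mul_le_mul_right _ hpos
  calc Nat.choose n a * Nat.choose n k * (a * (k + 1))
      = (Nat.choose n a * a) * (Nat.choose n k * (k + 1)) := by ring
    _ = Nat.choose n (a - 1) * (n - (a - 1)) * (Nat.choose n k * (k + 1)) := by rw [h2]
    _ = Nat.choose n (a - 1) * Nat.choose n k * ((n - (a - 1)) * (k + 1)) := by ring
    _ ≤ Nat.choose n (a - 1) * Nat.choose n k * ((n - k) * a) := by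
        apply Nat.mul_le_mul_left
        apply Nat.mul_le_mul <;> omega
    _ = Nat.choose n (a - 1) * (Nat.choose n k * (n - k)) * a := by ring
    _ = Nat.choose n (a - 1) * (Nat.choose n (k + 1) * (k + 1)) * a := by rw [h1]
    _ = Nat.choose n (a - 1) * Nat.choose n (k + 1) * (a * (k + 1)) := by ring

/-- For fixed `n` and `l ≤ n`, the sequence `a_k = C(n, l-k) * C(n, k)`,
`k = 0, 1, ..., l`, is unimodal. -/
theorem product_binomial_unimodal (n l : ℕ) (hl : l ≤ n) :
    ∃ m : ℕ, m ≤ l ∧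
      (∀ k, k < m → Nat.choose n (l - k) * Nat.choose n k ≤
        Nat.choose n (l - (k + 1)) * Nat.choose n (k + 1)) ∧
      (∀ k, m ≤ k → k < l → Nat.choose n (l - (k + 1)) * Nat.choose n (k + 1) ≤
        Nat.choose n (l - k) * Nat.choose n k) := by
  refine ⟨l / 2, by omega, ?_, ?_⟩
  · intro k hk
    exact pbu_step n l k hl (by omega)
  · intro k hk hkl
    have := pbu_step n l (l - k - 1) hl (by omega)
    have e1 : l - (l - k - 1) = k + 1 := by omega
    have e2 : l - (l - k - 1 + 1) = k := by omega
    rw [e1, e2] at this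
    calc Nat.choose n (l - (k + 1)) * Nat.choose n (k + 1)
        = Nat.choose n (k + 1) * Nat.choose n (l - (k + 1)) := by ring
      _ = Nat.choose n (k + 1) * Nat.choose n (l - k - 1) := by rw [Nat.sub_sub]
      _ ≤ Nat.choose n k * Nat.choose n (l - k - 1 + 1) := this
      _ = Nat.choose n (l - k) * Nat.choose n k := by
          have e3 : l - k - 1 + 1 = l - k := by omega
          rw [e3, mul_comm]
end

section
/- For k < n/2 and i = -l + 2k < 0 with j = n - l, there is an injection from the set of four-step lattice paths of length n from the origin to (i,j) into the set of such paths ending at (i+2, j), obtained by reflecting the portion after the last intersection with the vertical line x = i+1. -/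
theorem exists_eq_of_sub_one_le_succ {f : ℕ → ℤ} {c : ℤ} {n : ℕ}
    (hstep : ∀ t < n, f t - 1 ≤ f (t + 1)) (h0 : c ≤ f 0) (hn : f n < c) :
    ∃ t < n, f t = c := by
  induction n with
  | zero => omega
  | succ n ih =>
    by_cases hc : c ≤ f n
    · exact ⟨n, n.lt_succ_self, by linarith [hstep n n.lt_succ_self]⟩
    · obtain ⟨t, ht, hft⟩ := ih (fun t ht => hstep t (by omega)) (by omega)
      exact ⟨t, by omega, hft⟩

namespace LatticePath

def reflectStep : ℤ × ℤ →+ ℤ × ℤ := (AddEquiv.neg ℤ).prodCongr (AddEquiv.refl ℤ)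

@[simp]
theorem reflectStep_apply (s : ℤ × ℤ) : reflectStep s = (-s.1, s.2) := rfl

theorem reflectStep_involutive : Function.Involutive reflectStep := fun s => by simp

def position (p : List (ℤ × ℤ)) (t : ℕ) : ℤ × ℤ := (p.take t).sum

theorem position_length (p : List (ℤ × ℤ)) : position p p.length = p.sum := by
  simp [position]

theorem position_add (p : List (ℤ × ℤ)) (m k : ℕ) :
    position p (m + k) = position p m + ((p.drop m).take k).sum := by
  simp [position, List.take_add]

def reflectFrom (m : ℕ) (p : List (ℤ × ℤ)) : List (ℤ × ℤ) :=
  p.take m ++ (p.drop m).map reflectStep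

@[simp]
theorem length_reflectFrom (m : ℕ) (p : List (ℤ × ℤ)) :
    (reflectFrom m p).length = p.length := by
  simp [reflectFrom]; omega

theorem take_reflectFrom (m : ℕ) (p : List (ℤ × ℤ)) :
    (reflectFrom m p).take m = p.take m := by
  rcases le_or_gt m p.length with h | h
  · exact List.take_left' (by simpa)
  · simp [reflectFrom, List.drop_of_length_le h.le]

theorem drop_reflectFrom (m : ℕ) (p : List (ℤ × ℤ)) :
    (reflectFrom m p).drop m = (p.drop m).map reflectStep := by
  rcases le_or_gt m p.length with h | h
  · exact List.drop_left' (by simpa)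
  · simp [reflectFrom, List.drop_of_length_le h.le, List.take_of_length_le h.le]

theorem reflectFrom_reflectFrom (m : ℕ) (p : List (ℤ × ℤ)) :
    reflectFrom m (reflectFrom m p) = p := by
  rw [reflectFrom, take_reflectFrom, drop_reflectFrom, List.map_map,
    reflectStep_involutive.comp_self, List.map_id, List.take_append_drop]

theorem position_reflectFrom_of_le {m t : ℕ} (h : t ≤ m) (p : List (ℤ × ℤ)) :
    position (reflectFrom m p) t = position p t := by
  have take_take_m (q : List (ℤ × ℤ)) : (q.take m).take t = q.take t := by
    rw [List.take_take, min_eq_left h]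
  rw [position, ← take_take_m, take_reflectFrom, take_take_m, position]

theorem position_reflectFrom_of_ge {m t : ℕ} (h : m ≤ t) (p : List (ℤ × ℤ)) :
    position (reflectFrom m p) t = position p m + reflectStep (position p t - position p m) := by
  obtain ⟨k, rfl⟩ := Nat.exists_eq_add_of_le h
  rw [position_add, position_add, position_reflectFrom_of_le le_rfl, drop_reflectFrom,
    ← List.map_take, ← map_list_sum, add_sub_cancel_left]

theorem fst_position_reflectFrom_eq_iff {m : ℕ} {p : List (ℤ × ℤ)} {c : ℤ}
    (hm : (position p m).1 = c) (t : ℕ) :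
    (position (reflectFrom m p) t).1 = c ↔ (position p t).1 = c := by
  rcases le_total t m with h | h
  · rw [position_reflectFrom_of_le h]
  · rw [position_reflectFrom_of_ge h]
    simp only [Prod.fst_add, reflectStep_apply, Prod.fst_sub]
    omega

def lastVisit (c : ℤ) (p : List (ℤ × ℤ)) : ℕ :=
  Nat.findGreatest (fun t => (position p t).1 = c) p.length

def reflectAtLastVisit (c : ℤ) (p : List (ℤ × ℤ)) : List (ℤ × ℤ) :=
  reflectFrom (lastVisit c p) p

variable {c : ℤ} {p : List (ℤ × ℤ)}

theorem lastVisit_le_length : lastVisit c p ≤ p.length :=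
  Nat.findGreatest_le _

theorem fst_position_lastVisit (h : ∃ t ≤ p.length, (position p t).1 = c) :
    (position p (lastVisit c p)).1 = c :=
  let ⟨_, ht, hc⟩ := h
  Nat.findGreatest_spec (P := fun t => (position p t).1 = c) ht hc

theorem lastVisit_reflectAtLastVisit (hm : (position p (lastVisit c p)).1 = c) :
    lastVisit c (reflectAtLastVisit c p) = lastVisit c p := by
  simp_rw [lastVisit, reflectAtLastVisit, length_reflectFrom, fst_position_reflectFrom_eq_iff hm]

theorem reflectAtLastVisit_reflectAtLastVisit (h : ∃ t ≤ p.length, (position p t).1 = c) :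
    reflectAtLastVisit c (reflectAtLastVisit c p) = p := by
  rw [reflectAtLastVisit, lastVisit_reflectAtLastVisit (fst_position_lastVisit h),
    reflectAtLastVisit, reflectFrom_reflectFrom]

theorem injOn_reflectAtLastVisit (c : ℤ) :
    Set.InjOn (reflectAtLastVisit c) {p | ∃ t ≤ p.length, (position p t).1 = c} :=
  Set.LeftInvOn.injOn fun _ h => reflectAtLastVisit_reflectAtLastVisit h

@[simp]
theorem length_reflectAtLastVisit : (reflectAtLastVisit c p).length = p.length :=
  length_reflectFrom _ _

theorem sum_reflectAtLastVisit (h : ∃ t ≤ p.length, (position p t).1 = c) :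
    (reflectAtLastVisit c p).sum = (2 * c - p.sum.1, p.sum.2) := by
  have hm := fst_position_lastVisit h
  rw [← position_length, length_reflectAtLastVisit, reflectAtLastVisit,
    position_reflectFrom_of_ge lastVisit_le_length, position_length]
  ext <;>
    simp only [Prod.fst_add, Prod.snd_add, Prod.fst_sub, Prod.snd_sub, reflectStep_apply, hm] <;>
    ring

end LatticePath

namespace IsFourStepPath

open LatticePath

variable {p : List (ℤ × ℤ)}

theorem reflectFrom (hp : IsFourStepPath p) (m : ℕ) : IsFourStepPath (reflectFrom m p) := by
  intro s hs
  rcases List.mem_append.1 hs with hs | hs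
  · exact hp s (List.mem_of_mem_take hs)
  · obtain ⟨s, hs', rfl⟩ := List.mem_map.1 hs
    rcases hp s (List.mem_of_mem_drop hs') with rfl | rfl | rfl | rfl <;> simp

theorem neg_one_le_fst (hp : IsFourStepPath p) {s : ℤ × ℤ} (hs : s ∈ p) : -1 ≤ s.1 := by
  rcases hp s hs with rfl | rfl | rfl | rfl <;> simp

theorem exists_fst_position_eq (hp : IsFourStepPath p) {c : ℤ} (h0 : c ≤ 0)
    (hend : p.sum.1 < c) : ∃ t ≤ p.length, (position p t).1 = c := by
  have hstep : ∀ t < p.length, (position p t).1 - 1 ≤ (position p (t + 1)).1 := fun t ht => by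
    rw [position, position, List.sum_take_succ _ _ ht, Prod.fst_add]
    linarith [hp.neg_one_le_fst (List.getElem_mem ht)]
  obtain ⟨t, ht, hc⟩ := exists_eq_of_sub_one_le_succ hstep (by simpa [position])
    (by rwa [position_length])
  exact ⟨t, ht.le, hc⟩

end IsFourStepPath

open LatticePath in
theorem four_step_injection_general (n : ℕ)
    (i : ℤ) (hineg : i < 0)
    (j : ℤ) :
    ∃ f : {p : List (ℤ × ℤ) // p.length = n ∧ IsFourStepPath p ∧ p.sum = (i, j)} →
        {p : List (ℤ × ℤ) // p.length = n ∧ IsFourStepPath p ∧ p.sum = (i + 2, j)},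
      Function.Injective f := by
  have visits
      (p : {p : List (ℤ × ℤ) // p.length = n ∧ IsFourStepPath p ∧ p.sum = (i, j)}) :
      ∃ t ≤ p.1.length, (position p.1 t).1 = i + 1 :=
    p.2.2.1.exists_fst_position_eq (by omega) (by rw [p.2.2.2]; omega)
  refine ⟨fun p => ⟨reflectAtLastVisit (i + 1) p.1, ?_, p.2.2.1.reflectFrom _, ?_⟩,
    fun p q hpq => Subtype.ext <| injOn_reflectAtLastVisit _ (visits p) (visits q) ?_⟩
  · rw [length_reflectAtLastVisit, p.2.1]
  · rw [sum_reflectAtLastVisit (visits p), p.2.2.2]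
    congr 1
    ring
  · exact congrArg Subtype.val hpq

/-- For `k < n/2` and `i = -l + 2k < 0`, `j = n - l`, there is an injection from
four-step lattice paths of length `n` from the origin to `(i,j)` into those
ending at `(i+2, j)`. -/
theorem four_step_injection (n l k : ℕ) (hk : 2 * k < n)
    (i : ℤ) (hi : i = -(l : ℤ) + 2 * k) (hineg : i < 0)
    (j : ℤ) (hj : j = (n : ℤ) - l) :
    ∃ f : {p : List (ℤ × ℤ) // p.length = n ∧ IsFourStepPath p ∧ p.sum = (i, j)} →
        {p : List (ℤ × ℤ) // p.length = n ∧ IsFourStepPath p ∧ p.sum = (i + 2, j)},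
      Function.Injective f :=
  four_step_injection_general n i hineg j
end

section
/- For fixed n, the sequence of polynomials D_{0,n}(q), D_{1,n-1}(q), ..., D_{n,0}(q) is q-unimodal: there is an index m such that the coefficientwise order D_{0,n}(q) <=_q D_{1,n-1}(q) <=_q ... <=_q D_{m,n-m}(q) >=_q ... >=_q D_{n,0}(q) holds. -/
/-- A lattice path with steps `N = (0,1)`, `E = (1,0)` and the diagonal step `D = (1,1)`. -/
def IsNEDPath (p : List (ℤ × ℤ)) : Prop :=
  ∀ s ∈ p, s = (0, 1) ∨ s = (1, 0) ∨ s = (1, 1)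

/-- The coefficient of `q^d` in `D_{i,j}(q)`: the number of NED-paths from the
origin to `(i,j)` with exactly `d` diagonal steps. -/
noncomputable def Dcoeff (i j d : ℕ) : ℕ :=
  Nat.card {p : List (ℤ × ℤ) //
    IsNEDPath p ∧ p.sum = ((i : ℤ), (j : ℤ)) ∧ p.count (1, 1) = d}

/-!
Reading a path as a word in `N, E, D`, a path to `(i, j)` with `d` diagonal steps is a word with
`j - d` letters `N`, `i - d` letters `E` and `d` letters `D`, so the coefficient of `q^d` in
`D_{i,j}` is `C(i+j-d, d) * C(i+j-2d, i-d)`. On the antidiagonal `i + j = n` only the second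
factor depends on `i`, and for every `d` it increases while `i ≤ j` and decreases afterwards,
so `m = ⌊n/2⌋` works.
-/

theorem Nat.card_eq_ite_nil_add_sum_card_preimage_cons {α : Type*} [Fintype α]
    (s : Set (List α)) (hs : s.Finite) [Decidable ([] ∈ s)] :
    Nat.card s = (if [] ∈ s then 1 else 0) + ∑ x, Nat.card (List.cons x ⁻¹' s) := by
  have : Finite s := hs
  have (x : α) : Finite (List.cons x ⁻¹' s) := hs.preimage List.cons_injective.injOn
  let e : s ≃ {_u : Unit // [] ∈ s} ⊕ Σ x, List.cons x ⁻¹' s :=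
    { toFun := fun
        | ⟨[], h⟩ => .inl ⟨(), h⟩
        | ⟨x :: t, h⟩ => .inr ⟨x, t, h⟩
      invFun := fun
        | .inl ⟨_, h⟩ => ⟨[], h⟩
        | .inr ⟨x, t, h⟩ => ⟨x :: t, h⟩
      left_inv := by rintro ⟨_ | ⟨x, t⟩, h⟩ <;> rfl
      right_inv := by rintro (⟨⟨⟩, h⟩ | ⟨x, t, h⟩) <;> rfl }
  rw [Nat.card_congr e, Nat.card_sum, Nat.card_sigma]
  split_ifs with h <;> simp [h]

theorem Nat.choose_le_succ_of_two_mul_lt {n r : ℕ} (h : 2 * r < n) :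
    n.choose r ≤ n.choose (r + 1) := by
  have hratio := Nat.choose_succ_right_eq n r
  have hgap : r + 1 ≤ n - r := by omega
  nlinarith

namespace NEDPath

/-- The letters `0, 1, 2` encode the steps `N, E, D`. -/
def step : Fin 3 → ℤ × ℤ := ![(0, 1), (1, 0), (1, 1)]

theorem step_injective : Function.Injective step := by decide

theorem sum_map_step (l : List (Fin 3)) :
    (l.map step).sum = (((l.count 1 + l.count 2 : ℕ) : ℤ), ((l.count 0 + l.count 2 : ℕ) : ℤ)) := by
  induction l with
  | nil => rfl
  | cons x t ih =>
    rw [List.map_cons, List.sum_cons, ih]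
    fin_cases x <;> simp [step, Prod.ext_iff] <;> omega

theorem count_map_step_two (l : List (Fin 3)) : (l.map step).count (1, 1) = l.count 2 :=
  List.count_map_of_injective l step step_injective 2

def words (a b d : ℕ) : Set (List (Fin 3)) :=
  {l | l.count 0 = a ∧ l.count 1 = b ∧ l.count 2 = d}

theorem count_add_count_add_count (l : List (Fin 3)) :
    l.count 0 + l.count 1 + l.count 2 = l.length := by
  induction l with
  | nil => rfl
  | cons x t ih => fin_cases x <;> simp <;> omega

theorem finite_words (a b d : ℕ) : (words a b d).Finite :=
  (List.finite_length_eq (Fin 3) (a + b + d)).subset fun l ⟨h0, h1, h2⟩ => by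
    simp [← count_add_count_add_count l, h0, h1, h2]

theorem card_words (a b d : ℕ) :
    Nat.card (words a b d) = (a + b + d).choose d * (a + b).choose b := by
  classical
  suffices ∀ n a b d, a + b + d = n →
      Nat.card (words a b d) = (a + b + d).choose d * (a + b).choose b from this _ a b d rfl
  intro n
  induction n with
  | zero =>
    rintro a b d h
    obtain ⟨rfl, rfl, rfl⟩ : a = 0 ∧ b = 0 ∧ d = 0 := by omega
    rw [Nat.card_eq_ite_nil_add_sum_card_preimage_cons _ (finite_words 0 0 0), Fin.sum_univ_three]
    simp [words]
  | succ n ih =>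
    intro a b d h
    rw [Nat.card_eq_ite_nil_add_sum_card_preimage_cons _ (finite_words a b d), Fin.sum_univ_three]
    simp only [words] at ih ⊢
    -- splitting off the first letter leaves Pascal's rule for trinomial coefficients
    rcases a with _ | a <;> rcases b with _ | b <;> rcases d with _ | d <;>
      simp (disch := omega) [ih, ← add_assoc, add_right_comm _ 1, Nat.choose_succ_succ'] <;>
      first | omega | ring

end NEDPath

section Dcoeff

open NEDPath

theorem isNEDPath_iff_mem_range {p : List (ℤ × ℤ)} :
    IsNEDPath p ↔ p ∈ Set.range (List.map step) := by
  simp [Set.range_list_map, IsNEDPath, step, or_comm, or_left_comm]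

theorem Dcoeff_eq_card (i j d : ℕ) :
    Dcoeff i j d = Nat.card {l : List (Fin 3) |
      l.count 1 + l.count 2 = i ∧ l.count 0 + l.count 2 = j ∧ l.count 2 = d} := by
  have hpaths : {p | IsNEDPath p ∧ p.sum = ((i : ℤ), (j : ℤ)) ∧ p.count (1, 1) = d} =
      List.map step '' (List.map step ⁻¹' {p | p.sum = ((i : ℤ), (j : ℤ)) ∧ p.count (1, 1) = d}) := by
    rw [Set.image_preimage_eq_range_inter]
    ext p
    exact isNEDPath_iff_mem_range.and Iff.rfl
  rw [Dcoeff, ← Set.coe_ofPred, hpaths, Nat.card_image_of_injective step_injective.list_map]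
  congr
  ext l
  simp only [Set.mem_preimage, Set.mem_ofPred_eq, sum_map_step, count_map_step_two, Prod.mk.injEq,
    Nat.cast_inj, and_assoc]

theorem Dcoeff_add_add (a b d : ℕ) :
    Dcoeff (b + d) (a + d) d = (a + b + d).choose d * (a + b).choose b := by
  rw [Dcoeff_eq_card, ← card_words]
  congr
  ext l
  omega

theorem Dcoeff_eq_zero_of_lt {i j d : ℕ} (h : i < d ∨ j < d) : Dcoeff i j d = 0 := by
  rw [Dcoeff_eq_card, Nat.card_eq_zero]
  exact .inl ⟨fun ⟨l, hi, hj, hd⟩ => by omega⟩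

theorem Dcoeff_comm (i j d : ℕ) : Dcoeff i j d = Dcoeff j i d := by
  by_cases h : d ≤ i ∧ d ≤ j
  · obtain ⟨b, rfl⟩ := Nat.exists_eq_add_of_le' h.1
    obtain ⟨a, rfl⟩ := Nat.exists_eq_add_of_le' h.2
    rw [Dcoeff_add_add, Dcoeff_add_add, add_comm b a, Nat.choose_symm_add]
  · rw [Dcoeff_eq_zero_of_lt (by omega), Dcoeff_eq_zero_of_lt (by omega)]

theorem Dcoeff_le_Dcoeff_of_le {i j : ℕ} (h : i ≤ j) (d : ℕ) :
    Dcoeff i (j + 1) d ≤ Dcoeff (i + 1) j d := by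
  by_cases hd : d ≤ i
  · obtain ⟨b, rfl⟩ := Nat.exists_eq_add_of_le' hd
    obtain ⟨a, rfl⟩ := Nat.exists_eq_add_of_le' (hd.trans h)
    rw [add_right_comm a, add_right_comm b, Dcoeff_add_add, Dcoeff_add_add,
      show a + 1 + b = a + (b + 1) by ring]
    exact Nat.mul_le_mul_left _ (Nat.choose_le_succ_of_two_mul_lt (by omega))
  · rw [Dcoeff_eq_zero_of_lt (Or.inl (not_le.1 hd))]
    exact Nat.zero_le _

theorem Dcoeff_le_Dcoeff_of_ge {i j : ℕ} (h : j ≤ i) (d : ℕ) :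
    Dcoeff (i + 1) j d ≤ Dcoeff i (j + 1) d := by
  rw [Dcoeff_comm, Dcoeff_comm i]
  exact Dcoeff_le_Dcoeff_of_le h d

end Dcoeff

/-- For fixed `n`, the sequence of polynomials `D_{0,n}(q), D_{1,n-1}(q), ..., D_{n,0}(q)`
is `q`-unimodal: coefficientwise it increases up to some index `m` and then decreases. -/
theorem diag_path_q_unimodal (n : ℕ) :
    ∃ m : ℕ, m ≤ n ∧
      (∀ k, k < m → ∀ d, Dcoeff k (n - k) d ≤ Dcoeff (k + 1) (n - (k + 1)) d) ∧
      (∀ k, m ≤ k → k < n → ∀ d, Dcoeff (k + 1) (n - (k + 1)) d ≤ Dcoeff k (n - k) d) := by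
  refine ⟨n / 2, Nat.div_le_self n 2, fun k hk d => ?_, fun k hk hkn d => ?_⟩
  · simpa [show n - (k + 1) + 1 = n - k by omega] using
      Dcoeff_le_Dcoeff_of_le (show k ≤ n - (k + 1) by omega) d
  · simpa [show n - (k + 1) + 1 = n - k by omega] using
      Dcoeff_le_Dcoeff_of_ge (show n - (k + 1) ≤ k by omega) d
end

section
/- For k < n/2, the reflection map sending a north-east path p from (0,0) to (k, n-k) to the path obtained by reflecting the portion of p after its last intersection with the line y = x + n - 2k - 1 is a well-defined injection into paths from (0,0) to (k+1, n-k-1), which moreover preserves the number of diagonal steps when applied to paths with steps N, E, D (reflection swapping N and E steps and fixing D steps). -/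
/-- Reflect, in the line `y = x + c`, the portion of the path `p` after its last
intersection with that line: steps before the last intersection are kept, and the
later steps have their coordinates swapped (reflection swaps `N` and `E`, fixes `D`). -/
def reflectAfter (c : ℤ) (p : List (ℤ × ℤ)) : List (ℤ × ℤ) :=
  let t := Nat.findGreatest (fun m => (p.take m).sum.2 = (p.take m).sum.1 + c) p.length
  p.take t ++ (p.drop t).map (fun s => (s.2, s.1))


/-!
Call `y - x` at the point reached after `m` steps the height `h_m` of the path. Swapping the
coordinates of the steps after index `t` replaces each later height `h` by `2 h_t - h`, so if
`h_t = c` the indices where the path meets the line `y = x + c` are unchanged. Hence the last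
intersection is the same for `p` and for its reflection, and reflecting twice returns `p`: the
reflection is an involution, so injective. A path to `(k, n - k)` does meet the line
(`c = n - 2k - 1`): each `N`, `E`, `D` step raises the height by at most one, and the height
goes from `0 ≤ c` to `c + 1`. The swapped tail moves the endpoint `(a, a + c + 1)` to
`(a + 1, a + c)`.
-/

open List

def heightAt (p : List (ℤ × ℤ)) (m : ℕ) : ℤ := (p.take m).sum.2 - (p.take m).sum.1

def lastHit (c : ℤ) (p : List (ℤ × ℤ)) : ℕ :=
  Nat.findGreatest (fun m => (p.take m).sum.2 = (p.take m).sum.1 + c) p.length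

def reflectFrom (t : ℕ) (p : List (ℤ × ℤ)) : List (ℤ × ℤ) :=
  p.take t ++ (p.drop t).map Prod.swap

theorem reflectAfter_eq_reflectFrom (c : ℤ) (p : List (ℤ × ℤ)) :
    reflectAfter c p = reflectFrom (lastHit c p) p := rfl

theorem heightAt_length (p : List (ℤ × ℤ)) : heightAt p p.length = p.sum.2 - p.sum.1 := by
  simp [heightAt]

theorem sum_map_swap (l : List (ℤ × ℤ)) : (l.map Prod.swap).sum = l.sum.swap := by
  simpa using (map_list_sum (AddEquiv.prodComm (M := ℤ) (N := ℤ)) l).symm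

section Reflection

variable (t : ℕ) (p : List (ℤ × ℤ))

theorem length_reflectFrom : (reflectFrom t p).length = p.length := by
  simp only [reflectFrom, length_append, length_take, length_map, length_drop]
  omega

theorem take_reflectFrom : (reflectFrom t p).take t = p.take t := by
  rcases le_total t p.length with ht | ht
  · simp [reflectFrom, ht]
  · simp [reflectFrom, drop_of_length_le ht]

theorem drop_reflectFrom : (reflectFrom t p).drop t = (p.drop t).map Prod.swap := by
  rcases le_total t p.length with ht | ht
  · simp [reflectFrom, ht]
  · simp [reflectFrom, drop_of_length_le ht]

theorem reflectFrom_reflectFrom : reflectFrom t (reflectFrom t p) = p := by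
  rw [reflectFrom, take_reflectFrom, drop_reflectFrom, map_map, Prod.swap_swap_eq, map_id,
    take_append_drop]

theorem sum_reflectFrom : (reflectFrom t p).sum = (p.take t).sum + (p.drop t).sum.swap := by
  rw [reflectFrom, sum_append, sum_map_swap]

theorem count_reflectFrom_diag (x : ℤ) : (reflectFrom t p).count (x, x) = p.count (x, x) := by
  have hswap := count_map_of_injective (p.drop t) Prod.swap Prod.swap_injective (x, x)
  rw [Prod.swap_prod_mk] at hswap
  rw [reflectFrom, count_append, hswap, ← count_append, take_append_drop]

theorem heightAt_add (j : ℕ) : heightAt p (t + j) = heightAt p t + heightAt (p.drop t) j := by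
  simp only [heightAt, take_add, sum_append, Prod.fst_add, Prod.snd_add]
  ring

theorem heightAt_map_swap (j : ℕ) : heightAt (p.map Prod.swap) j = -heightAt p j := by
  simp only [heightAt, ← map_take, sum_map_swap, Prod.fst_swap, Prod.snd_swap]
  ring

theorem heightAt_reflectFrom_of_le {m : ℕ} (hm : m ≤ t) :
    heightAt (reflectFrom t p) m = heightAt p m := by
  have htake : (reflectFrom t p).take m = p.take m := by
    rw [← min_eq_left hm, ← take_take, take_reflectFrom, take_take]
  simp only [heightAt, htake]

theorem heightAt_reflectFrom_of_ge {m : ℕ} (hm : t ≤ m) :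
    heightAt (reflectFrom t p) m = 2 * heightAt p t - heightAt p m := by
  obtain ⟨j, rfl⟩ := Nat.exists_eq_add_of_le hm
  rw [heightAt_add, heightAt_add, drop_reflectFrom, heightAt_map_swap,
    heightAt_reflectFrom_of_le t p le_rfl]
  ring

end Reflection

theorem IsNEDPath.reflectFrom {p : List (ℤ × ℤ)} (hp : IsNEDPath p) (t : ℕ) :
    IsNEDPath (reflectFrom t p) := by
  intro s hs
  rcases mem_append.1 hs with hs | hs
  · exact hp s (mem_of_mem_take hs)
  · obtain ⟨s', hs', rfl⟩ := mem_map.1 hs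
    rcases hp s' (mem_of_mem_drop hs') with rfl | rfl | rfl <;> simp

theorem IsNEDPath.heightAt_succ_le {p : List (ℤ × ℤ)} (hp : IsNEDPath p) (i : ℕ) :
    heightAt p (i + 1) ≤ heightAt p i + 1 := by
  rw [heightAt, heightAt, take_add_one]
  cases hi : p[i]? with
  | none => simp
  | some s =>
    simp only [Option.toList_some, sum_append, sum_singleton, Prod.snd_add, Prod.fst_add]
    rcases hp s (mem_of_getElem? hi) with rfl | rfl | rfl <;> omega

theorem IsNEDPath.exists_heightAt_eq {p : List (ℤ × ℤ)} (hp : IsNEDPath p) {c : ℤ}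
    (hc : 0 ≤ c) (hend : c ≤ heightAt p p.length) : ∃ m ≤ p.length, heightAt p m = c := by
  have hex : ∃ m, c ≤ heightAt p m := ⟨_, hend⟩
  refine ⟨Nat.find hex, Nat.find_min' hex hend, le_antisymm ?_ (Nat.find_spec hex)⟩
  rcases hfind : Nat.find hex with _ | j
  · simpa [heightAt] using hc
  · have hbelow : heightAt p j < c := not_le.1 (Nat.find_min hex (by omega))
    linarith [hp.heightAt_succ_le j]

section LastHit

variable {c : ℤ} {p : List (ℤ × ℤ)}

theorem lastHit_eq_findGreatest (c : ℤ) (p : List (ℤ × ℤ)) :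
    lastHit c p = Nat.findGreatest (fun m => heightAt p m = c) p.length := by
  simp only [lastHit, heightAt, sub_eq_iff_eq_add']

theorem heightAt_lastHit (h : ∃ m ≤ p.length, heightAt p m = c) :
    heightAt p (lastHit c p) = c := by
  obtain ⟨m, hm, hmc⟩ := h
  rw [lastHit_eq_findGreatest]
  exact Nat.findGreatest_spec (P := fun m => heightAt p m = c) hm hmc

theorem heightAt_reflectFrom_eq_iff {t : ℕ} (ht : heightAt p t = c) (m : ℕ) :
    heightAt (reflectFrom t p) m = c ↔ heightAt p m = c := by
  rcases le_total m t with hm | hm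
  · rw [heightAt_reflectFrom_of_le t p hm]
  · rw [heightAt_reflectFrom_of_ge t p hm, ht]
    omega

theorem lastHit_reflectAfter (h : ∃ m ≤ p.length, heightAt p m = c) :
    lastHit c (reflectAfter c p) = lastHit c p := by
  have ht := heightAt_lastHit h
  rw [reflectAfter_eq_reflectFrom, lastHit_eq_findGreatest, length_reflectFrom]
  simp only [heightAt_reflectFrom_eq_iff ht, ← lastHit_eq_findGreatest]

theorem reflectAfter_reflectAfter (h : ∃ m ≤ p.length, heightAt p m = c) :
    reflectAfter c (reflectAfter c p) = p := by
  rw [reflectAfter_eq_reflectFrom (p := reflectAfter c p), lastHit_reflectAfter h,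
    reflectAfter_eq_reflectFrom, reflectFrom_reflectFrom]

theorem sum_reflectAfter (h : ∃ m ≤ p.length, heightAt p m = c) :
    (reflectAfter c p).sum = (p.sum.2 - c, p.sum.1 + c) := by
  have ht := heightAt_lastHit h
  rw [heightAt] at ht
  have hsplit : p.sum = (p.take (lastHit c p)).sum + (p.drop (lastHit c p)).sum := by
    rw [← sum_append, take_append_drop]
  rw [reflectAfter_eq_reflectFrom, sum_reflectFrom, hsplit]
  ext <;> simp only [Prod.fst_add, Prod.snd_add, Prod.fst_swap, Prod.snd_swap] <;> linarith

end LastHit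

/-- For `k < n/2`, reflection in the line `y = x + (n - 2k - 1)` after the last
intersection is a well-defined injection from NED-paths from the origin to `(k, n-k)`
to NED-paths from the origin to `(k+1, n-k-1)`, preserving the number of diagonal
steps. -/
theorem reflection_principle (n k : ℕ) (h : 2 * k < n) :
    (∀ p : List (ℤ × ℤ), IsNEDPath p → p.sum = ((k : ℤ), (n : ℤ) - k) →
      IsNEDPath (reflectAfter ((n : ℤ) - 2 * k - 1) p) ∧
      (reflectAfter ((n : ℤ) - 2 * k - 1) p).sum = ((k : ℤ) + 1, (n : ℤ) - k - 1) ∧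
      (reflectAfter ((n : ℤ) - 2 * k - 1) p).count (1, 1) = p.count (1, 1)) ∧
    Set.InjOn (reflectAfter ((n : ℤ) - 2 * k - 1))
      {p : List (ℤ × ℤ) | IsNEDPath p ∧ p.sum = ((k : ℤ), (n : ℤ) - k)} := by
  have hhit : ∀ p : List (ℤ × ℤ), IsNEDPath p → p.sum = ((k : ℤ), (n : ℤ) - k) →
      ∃ m ≤ p.length, heightAt p m = (n : ℤ) - 2 * k - 1 := by
    intro p hp hsum
    refine hp.exists_heightAt_eq (by omega) ?_
    rw [heightAt_length, hsum]
    omega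
  refine ⟨fun p hp hsum => ⟨hp.reflectFrom _, ?_, count_reflectFrom_diag _ p 1⟩, ?_⟩
  · rw [sum_reflectAfter (hhit p hp hsum), hsum]
    ext <;> dsimp only <;> ring
  · intro p hp q hq hpq
    rw [← reflectAfter_reflectAfter (hhit p hp.1 hp.2), hpq,
      reflectAfter_reflectAfter (hhit q hq.1 hq.2)]
end

section
/- For a partition λ and index k < n/2, the reflection injection from north-east paths avoiding λ^k (ending at (k, n-k)) maps into north-east paths avoiding λ^{k+1} (ending at (k+1, n-k-1)): if a path contains no point of the Ferrers diagram of λ^k, its reflected image contains no point of the Ferrers diagram of λ^{k+1} = (λ_{k+1}, ..., λ_m). -/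
/-- `Avoids p j μ` : every lattice point `(x,y)` on the path `p` ending at height `j`
satisfies `x ≥ μ (j - y)`, i.e. `p` avoids the Ferrers diagram of the partition `μ`. -/
def Avoids (p : List (ℤ × ℤ)) (j : ℕ) (μ : ℕ → ℕ) : Prop :=
  ∀ m : ℕ, ((μ (j - ((p.take m).sum.2).toNat) : ℤ)) ≤ (p.take m).sum.1

/-! Let `c = n - 2k - 1` and let `t` be the last time the path meets the line `y = x + c`.
Up to `t` the reflected path agrees with `p`. The offset `y - x` of `p` changes by `±1` per
step, starts at `0 ≤ c` and ends at `c + 1`, so after `t` it stays above `c`: there the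
reflection `(x, y) ↦ (y - c, x + c)` moves every point weakly right and down. Finally, a point
moved right and down that avoided `λ^k` below height `n - k` avoids `λ^{k+1}` below height
`n - k - 1`, because `λ` is weakly decreasing and the row index of `λ` it is compared with does
not decrease. -/

theorem List.sum_map_prod_swap {M N : Type*} [AddMonoid M] [AddMonoid N] (l : List (M × N)) :
    (l.map Prod.swap).sum = l.sum.swap := by
  simpa using (map_list_sum (AddEquiv.prodComm : M × N ≃+ N × M) l).symm

theorem exists_eq_of_succ_le_add_one {f : ℕ → ℤ} (hf : ∀ i, f (i + 1) ≤ f i + 1)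
    {a b : ℕ} (hab : a ≤ b) {c : ℤ} (hac : f a ≤ c) (hcb : c ≤ f b) :
    ∃ j, a ≤ j ∧ j ≤ b ∧ f j = c := by
  induction b, hab using Nat.le_induction with
  | base => exact ⟨a, le_rfl, le_rfl, by omega⟩
  | succ b hab ih =>
    by_cases hcb' : c ≤ f b
    · obtain ⟨j, haj, hjb, hj⟩ := ih hcb'
      exact ⟨j, haj, hjb.trans b.le_succ, hj⟩
    · exact ⟨b + 1, hab.trans b.le_succ, le_rfl, by linarith [hf b]⟩

def diagOffset (p : List (ℤ × ℤ)) (m : ℕ) : ℤ :=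
  (p.take m).sum.2 - (p.take m).sum.1

theorem IsNEPath.diagOffset_succ_le {p : List (ℤ × ℤ)} (hp : IsNEPath p) (i : ℕ) :
    diagOffset p (i + 1) ≤ diagOffset p i + 1 := by
  rcases lt_or_ge i p.length with hi | hi
  · rcases hp _ (p.getElem_mem hi) with hstep | hstep <;>
      simp only [diagOffset, List.sum_take_succ p i hi, hstep, Prod.fst_add, Prod.snd_add] <;> omega
  · simp [diagOffset, List.take_of_length_le hi, List.take_of_length_le (hi.trans i.le_succ)]

theorem diagOffset_of_length_le {p : List (ℤ × ℤ)} {m : ℕ} (hm : p.length ≤ m) :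
    diagOffset p m = p.sum.2 - p.sum.1 := by
  simp [diagOffset, List.take_of_length_le hm]

/-- The index of the last point of `p` on the line `y = x + c`, or `0` if there is none. -/
def lastCrossing (c : ℤ) (p : List (ℤ × ℤ)) : ℕ :=
  Nat.findGreatest (fun m => (p.take m).sum.2 = (p.take m).sum.1 + c) p.length

theorem lastCrossing_le_length (c : ℤ) (p : List (ℤ × ℤ)) : lastCrossing c p ≤ p.length :=
  Nat.findGreatest_le _

theorem reflectAfter_eq (c : ℤ) (p : List (ℤ × ℤ)) :
    reflectAfter c p =
      p.take (lastCrossing c p) ++ (p.drop (lastCrossing c p)).map Prod.swap :=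
  rfl

theorem IsNEPath.lastCrossing_spec {p : List (ℤ × ℤ)} (hp : IsNEPath p) {c : ℤ}
    (hc : 0 ≤ c) (hend : c < p.sum.2 - p.sum.1) :
    (p.take (lastCrossing c p)).sum.2 = (p.take (lastCrossing c p)).sum.1 + c ∧
      ∀ m, lastCrossing c p < m → c < diagOffset p m := by
  have hN : c < diagOffset p p.length := by rwa [diagOffset_of_length_le le_rfl]
  have hmeets : ∀ m ≤ p.length, diagOffset p m ≤ c →
      ∃ j, m ≤ j ∧ j ≤ p.length ∧ diagOffset p j = c := fun m hm hmc =>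
    exists_eq_of_succ_le_add_one hp.diagOffset_succ_le hm hmc hN.le
  constructor
  · obtain ⟨j, -, hj, hjc⟩ := hmeets 0 (Nat.zero_le _) (by simpa [diagOffset] using hc)
    unfold diagOffset at hjc
    exact Nat.findGreatest_spec (P := fun m => (p.take m).sum.2 = (p.take m).sum.1 + c) hj
      (by omega)
  · intro m htm
    by_contra! hmc
    rcases le_or_gt m p.length with hm | hm
    · obtain ⟨j, hmj, hj, hjc⟩ := hmeets m hm hmc
      exact Nat.findGreatest_is_greatest (htm.trans_le hmj) hj (by unfold diagOffset at hjc; omega)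
    · rw [diagOffset_of_length_le hm.le] at hmc
      omega

theorem take_take_append_map_swap {p : List (ℤ × ℤ)} {t m : ℕ} (hm : m ≤ t) :
    (p.take t ++ (p.drop t).map Prod.swap).take m = p.take m := by
  rw [List.take_append, List.take_take, min_eq_left hm, List.length_take]
  rcases le_or_gt t p.length with ht | ht
  · simp [min_eq_left ht, hm]
  · simp [List.drop_of_length_le ht.le]

/-- After a point on the line `y = x + c`, swapping the steps reflects the path in that line. -/
theorem sum_take_take_append_map_swap {p : List (ℤ × ℤ)} {t m : ℕ} (ht : t ≤ p.length)
    (htm : t ≤ m) {c : ℤ} (hon : (p.take t).sum.2 = (p.take t).sum.1 + c) :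
    ((p.take t ++ (p.drop t).map Prod.swap).take m).sum =
      ((p.take m).sum.2 - c, (p.take m).sum.1 + c) := by
  have hsplit : (p.take t).sum + ((p.take m).drop t).sum = (p.take m).sum := by
    simpa [List.take_take, min_eq_left htm] using List.sum_take_add_sum_drop (p.take m) t
  rw [List.take_append, List.take_of_length_le (by simp [htm]), List.length_take,
    min_eq_left ht, ← List.map_take, ← List.drop_take, List.sum_append, List.sum_map_prod_swap]
  rw [← hsplit]
  ext <;> simp only [Prod.fst_add, Prod.snd_add, Prod.fst_swap, Prod.snd_swap] <;> omega

theorem Avoids.shift_of_southeast {p q : List (ℤ × ℤ)} {lam : ℕ → ℕ} (hlam : Antitone lam)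
    {j k : ℕ}
    (hq : ∀ m, (q.take m).sum.2 ≤ (p.take m).sum.2 ∧ (p.take m).sum.1 ≤ (q.take m).sum.1)
    (hp : Avoids p j (fun t => lam (k + t))) :
    Avoids q (j - 1) (fun t => lam (k + 1 + t)) := by
  intro m
  obtain ⟨hy, hx⟩ := hq m
  have hidx :
      k + (j - ((p.take m).sum.2).toNat) ≤ k + 1 + (j - 1 - ((q.take m).sum.2).toNat) := by
    omega
  calc (lam (k + 1 + (j - 1 - ((q.take m).sum.2).toNat)) : ℤ)
      ≤ lam (k + (j - ((p.take m).sum.2).toNat)) := by exact_mod_cast hlam hidx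
    _ ≤ (p.take m).sum.1 := hp m
    _ ≤ (q.take m).sum.1 := hx

theorem IsNEPath.reflectAfter_southeast {p : List (ℤ × ℤ)} (hp : IsNEPath p) {c : ℤ}
    (hc : 0 ≤ c) (hend : c < p.sum.2 - p.sum.1) (m : ℕ) :
    ((reflectAfter c p).take m).sum.2 ≤ (p.take m).sum.2 ∧
      (p.take m).sum.1 ≤ ((reflectAfter c p).take m).sum.1 := by
  obtain ⟨hon, habove⟩ := hp.lastCrossing_spec hc hend
  rw [reflectAfter_eq]
  rcases le_or_gt m (lastCrossing c p) with hm | hm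
  · rw [take_take_append_map_swap hm]
    exact ⟨le_rfl, le_rfl⟩
  · rw [sum_take_take_append_map_swap (lastCrossing_le_length c p) hm.le hon]
    have hm_above := habove m hm
    unfold diagOffset at hm_above
    constructor <;> dsimp only <;> omega

/-- For a partition `λ` and `k < n/2`, the reflection injection maps north-east
paths to `(k, n-k)` avoiding `λ^k = (λ_k, ..., λ_m)` into north-east paths to
`(k+1, n-k-1)` avoiding `λ^{k+1} = (λ_{k+1}, ..., λ_m)`. -/
theorem reflection_preserves_avoidance (lam : ℕ → ℕ)
    (hlam : ∀ a b : ℕ, a ≤ b → lam b ≤ lam a) (n k : ℕ) (h : 2 * k < n)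
    (p : List (ℤ × ℤ)) (hp : IsNEPath p) (hend : p.sum = ((k : ℤ), (n : ℤ) - k))
    (havoid : Avoids p (n - k) (fun t => lam (k + t))) :
    Avoids (reflectAfter ((n : ℤ) - 2 * k - 1) p) (n - (k + 1)) (fun t => lam (k + 1 + t)) := by
  have hc : 0 ≤ (n : ℤ) - 2 * k - 1 := by omega
  have hend' : (n : ℤ) - 2 * k - 1 < p.sum.2 - p.sum.1 := by rw [hend]; omega
  rw [← Nat.sub_sub]
  exact havoid.shift_of_southeast hlam (hp.reflectAfter_southeast hc hend')
end

section
/- For the four-step upper half-plane path counts, the ballot-type nonnegativity holds: C(n,r)*C(n,s) - C(n,r-1)*C(n,s-1) >= 0 whenever r = (n-i-j)/2 and s = (n+i-j)/2 are integers with 0 <= r, s <= n and j >= 0. -/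
/-!
Since `C(n, a + 1) / C(n, a) = (n - a) / (a + 1)`, the ratio
`C(n, a + 1) C(n, b + 1) / (C(n, a) C(n, b))` equals `(n - a)(n - b) / ((a + 1)(b + 1))`,
which is at least `1` as soon as `a + b < n`. With `r + s = n - j ≤ n` this is the claim.
-/

theorem Nat.choose_mul_choose_le_choose_succ_mul_choose_succ {n a b : ℕ} (h : a + b < n) :
    n.choose a * n.choose b ≤ n.choose (a + 1) * n.choose (b + 1) := by
  have hfactors : (a + 1) * (b + 1) ≤ (n - a) * (n - b) := by
    rw [Nat.mul_comm (n - a)]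
    exact Nat.mul_le_mul (by omega) (by omega)
  refine Nat.le_of_mul_le_mul_right ?_ (by positivity : 0 < (a + 1) * (b + 1))
  calc n.choose a * n.choose b * ((a + 1) * (b + 1))
      ≤ n.choose a * n.choose b * ((n - a) * (n - b)) := Nat.mul_le_mul_left _ hfactors
    _ = n.choose a * (n - a) * (n.choose b * (n - b)) := by ring
    _ = n.choose (a + 1) * (a + 1) * (n.choose (b + 1) * (b + 1)) := by
      rw [Nat.choose_succ_right_eq, Nat.choose_succ_right_eq]
    _ = n.choose (a + 1) * n.choose (b + 1) * ((a + 1) * (b + 1)) := by ring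

namespace zchoose

theorem natCast (n k : ℕ) : zchoose n k = n.choose k := by
  simp [zchoose]

theorem of_neg {n : ℕ} {m : ℤ} (hm : m < 0) : zchoose n m = 0 :=
  if_neg (by omega)

theorem sub_one_mul_sub_one_le {n : ℕ} {r s : ℤ} (h : r + s ≤ n + 1) :
    zchoose n (r - 1) * zchoose n (s - 1) ≤ zchoose n r * zchoose n s := by
  rcases lt_or_ge (r - 1) 0 with hr | hr
  · simp [of_neg hr]
  rcases lt_or_ge (s - 1) 0 with hs | hs
  · simp [of_neg hs]
  obtain ⟨a, rfl⟩ : ∃ a : ℕ, r = a + 1 := ⟨(r - 1).toNat, by omega⟩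
  obtain ⟨b, rfl⟩ : ∃ b : ℕ, s = b + 1 := ⟨(s - 1).toNat, by omega⟩
  have hab : a + b < n := by omega
  rw [add_sub_cancel_right, add_sub_cancel_right, ← Nat.cast_succ, ← Nat.cast_succ]
  simpa only [natCast] using Nat.choose_mul_choose_le_choose_succ_mul_choose_succ hab

end zchoose

theorem ballot_nonneg_general (n : ℕ) (i j r s : ℤ)
    (hr : 2 * r = (n : ℤ) - i - j) (hs : 2 * s = (n : ℤ) + i - j)
    (hj : 0 ≤ j) :
    0 ≤ (zchoose n r : ℤ) * zchoose n s - (zchoose n (r - 1) : ℤ) * zchoose n (s - 1) := by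
  rw [sub_nonneg]
  exact_mod_cast zchoose.sub_one_mul_sub_one_le (by omega)

/-- Ballot-type nonnegativity: `C(n,r)C(n,s) - C(n,r-1)C(n,s-1) ≥ 0` whenever
`r = (n-i-j)/2` and `s = (n+i-j)/2` are integers with `0 ≤ r, s ≤ n` and `j ≥ 0`. -/
theorem ballot_nonneg (n : ℕ) (i j r s : ℤ)
    (hr : 2 * r = (n : ℤ) - i - j) (hs : 2 * s = (n : ℤ) + i - j)
    (hr0 : 0 ≤ r) (hrn : r ≤ n) (hs0 : 0 ≤ s) (hsn : s ≤ n) (hj : 0 ≤ j) :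
    0 ≤ (zchoose n r : ℤ) * zchoose n s - (zchoose n (r - 1) : ℤ) * zchoose n (s - 1) :=
  ballot_nonneg_general n i j r s hr hs hj
end
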